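/- Let G be a connected graph with Laplacian L and suppose the pair {v_i, v_j} has order h, i.e., the image of e_i − e_j in ℤ^n/Im(L) has order h. Let G'' be obtained from G by attaching another connected graph G' at a single vertex v_n of G (identifying v_n with one vertex of G'). Then the image of e_i − e_j in the quotient by the Laplacian of G'' also has order h. -/

import Mathlib

/-- Laplacian of a multigraph given by edge multiplicities on unordered pairs. -/
def lap {V : Type} [Fintype V] [DecidableEq V] (cE : Sym2 V → ℕ) : Matrix V V ℤ :=
  fun x y => if x = y then (∑ k : V, (cE s(x, k) : ℤ)) else -(cE s(x, y) : ℤ)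

/-- Underlying simple graph of a multigraph. -/
def mgraph {V : Type} (cE : Sym2 V → ℕ) : SimpleGraph V where
  Adj a b := a ≠ b ∧ 0 < cE s(a, b)
  symm := ⟨fun a b h => ⟨h.1.symm, by rw [Sym2.eq_swap]; exact h.2⟩⟩
  loopless := ⟨fun a h => h.1 rfl⟩

lemma lap_mulVec {n : ℕ} (cE : Sym2 (Fin n) → ℕ) (hloop : ∀ x : Fin n, cE s(x, x) = 0)
    (v : Fin n → ℤ) (x : Fin n) :
    (lap cE).mulVec v x = ∑ k, (cE s(x, k) : ℤ) * (v x - v k) := by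
  have e1 : (lap cE).mulVec v x
      = ∑ y, (if x = y then (∑ k : Fin n, (cE s(x, k) : ℤ)) else -(cE s(x, y) : ℤ)) * v y := rfl
  rw [e1, ← Finset.add_sum_erase _ _ (Finset.mem_univ x), if_pos rfl]
  have h2 : ∑ y ∈ Finset.univ.erase x,
      (if x = y then (∑ k : Fin n, (cE s(x, k) : ℤ)) else -(cE s(x, y) : ℤ)) * v y
      = ∑ y ∈ Finset.univ.erase x, -((cE s(x, y) : ℤ) * v y) := by
    refine Finset.sum_congr rfl fun y hy => ?_
    rw [if_neg (Ne.symm (Finset.ne_of_mem_erase hy))]; ring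
  have h3 : ∑ y ∈ Finset.univ.erase x, ((cE s(x, y) : ℤ) * v y)
      = ∑ y, (cE s(x, y) : ℤ) * v y := by
    rw [← Finset.add_sum_erase _ (fun y => (cE s(x, y) : ℤ) * v y) (Finset.mem_univ x)]
    simp [hloop x]
  rw [h2, Finset.sum_neg_distrib, h3]
  simp only [mul_sub]
  rw [Finset.sum_sub_distrib, ← Finset.sum_mul]
  ring

lemma sum_lap_mulVec {n : ℕ} (cE : Sym2 (Fin n) → ℕ) (hloop : ∀ x : Fin n, cE s(x, x) = 0)
    (v : Fin n → ℤ) : ∑ x, (lap cE).mulVec v x = 0 := by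
  simp only [lap_mulVec cE hloop v]
  have h4 : ∑ x : Fin n, ∑ k, (cE s(x, k) : ℤ) * (v x - v k)
      = ∑ x : Fin n, ∑ k, (cE s(x, k) : ℤ) * (v k - v x) := by
    rw [Finset.sum_comm]
    exact Finset.sum_congr rfl fun a _ => Finset.sum_congr rfl fun b _ => by rw [Sym2.eq_swap]
  have h5 : (∑ x : Fin n, ∑ k, (cE s(x, k) : ℤ) * (v x - v k))
      + ∑ x : Fin n, ∑ k, (cE s(x, k) : ℤ) * (v k - v x) = 0 := by
    rw [← Finset.sum_add_distrib]
    refine Finset.sum_eq_zero fun a _ => ?_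
    rw [← Finset.sum_add_distrib]
    exact Finset.sum_eq_zero fun b _ => by ring
  linarith [h4, h5]

lemma eq_at_of_sum_eq {n : ℕ} (f g : Fin n → ℤ) (v : Fin n)
    (h1 : ∀ a, a ≠ v → f a = g a) (h2 : ∑ a, f a = ∑ a, g a) : f v = g v := by
  have hf := Finset.add_sum_erase Finset.univ f (Finset.mem_univ v)
  have hg := Finset.add_sum_erase Finset.univ g (Finset.mem_univ v)
  have he : ∑ a ∈ Finset.univ.erase v, f a = ∑ a ∈ Finset.univ.erase v, g a :=
    Finset.sum_congr rfl fun a ha => h1 a (Finset.ne_of_mem_erase ha)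
  linarith

/-- if `G''` is obtained from a connected graph `G` (embedded via `φ`) by
attaching another connected graph at the single vertex `φ vn`, then the order of the class
of `e_i − e_j` in `ℤ^m/Im(L(G''))` equals its order in `ℤ^n/Im(L(G))`. -/
theorem order_invariant_under_attaching {n m : ℕ}
    (cE : Sym2 (Fin n) → ℕ) (cE'' : Sym2 (Fin m) → ℕ)
    (hloop : ∀ x : Fin n, cE s(x, x) = 0)
    (hloop'' : ∀ x : Fin m, cE'' s(x, x) = 0)
    (hconn : (mgraph cE).Connected)
    (hconn'' : (mgraph cE'').Connected)
    (φ : Fin n → Fin m) (hφ : Function.Injective φ) (vn : Fin n)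
    -- the part of `G''` on the vertices of `G` is exactly `G`
    (hmatch : ∀ a b : Fin n, cE'' s(φ a, φ b) = cE s(a, b))
    -- every edge of `G''` leaving the image of `G` is attached at `φ vn`
    (hsep : ∀ x : Fin m, (∀ a : Fin n, x ≠ φ a) →
      ∀ a : Fin n, a ≠ vn → cE'' s(x, φ a) = 0)
    (i j : Fin n) (hij : i ≠ j) (h : ℕ)
    (hord : IsLeast {h' : ℕ | 0 < h' ∧ ∃ S : Fin n → ℤ,
      (lap cE).mulVec S = (h' : ℤ) • (Pi.single i 1 - Pi.single j 1)} h) :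
    IsLeast {h' : ℕ | 0 < h' ∧ ∃ S : Fin m → ℤ,
      (lap cE'').mulVec S = (h' : ℤ) • (Pi.single (φ i) 1 - Pi.single (φ j) 1)} h := by
  classical
  -- notation for the image
  set Im : Finset (Fin m) := Finset.univ.image φ with hIm
  have hmemIm : ∀ x : Fin m, x ∈ Im ↔ ∃ a, φ a = x := by
    intro x; simp [hIm]
  have hinj2 : ∀ x ∈ (Finset.univ : Finset (Fin n)), ∀ y ∈ Finset.univ, φ x = φ y → x = y :=
    fun x _ y _ hxy => hφ hxy
  -- image part of the sum
  have himg : ∀ (W : Fin m → ℤ) (a : Fin n),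
      ∑ k ∈ Im, (cE'' s(φ a, k) : ℤ) * (W (φ a) - W k)
        = ∑ b, (cE s(a, b) : ℤ) * (W (φ a) - W (φ b)) := by
    intro W a
    rw [hIm, Finset.sum_image hinj2]
    exact Finset.sum_congr rfl fun b _ => by rw [hmatch]
  have hnotIm : ∀ k : Fin m, k ∈ Imᶜ → ∀ b : Fin n, k ≠ φ b := by
    intro k hk b
    rw [Finset.mem_compl, hmemIm] at hk
    exact fun hkb => hk ⟨b, hkb.symm⟩
  have hedge0 : ∀ k ∈ Imᶜ, ∀ a : Fin n, a ≠ vn → (cE'' s(φ a, k) : ℤ) = 0 := by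
    intro k hk a ha
    rw [Sym2.eq_swap, hsep k (hnotIm k hk) a ha]
    rfl
  -- RHS compatibility
  have hsingle : ∀ (c : ℤ) (a : Fin n),
      (c • ((Pi.single (φ i) 1 - Pi.single (φ j) 1 : Fin m → ℤ))) (φ a)
        = (c • ((Pi.single i 1 - Pi.single j 1 : Fin n → ℤ))) a := by
    intro c a
    simp only [Pi.smul_apply, Pi.sub_apply, Pi.single_apply, hφ.eq_iff]
  constructor
  · -- membership
    obtain ⟨hpos, S, hS⟩ := hord.1
    refine ⟨hpos, fun x => if hx : ∃ a, φ a = x then S hx.choose else S vn, ?_⟩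
    set S'' : Fin m → ℤ := fun x => if hx : ∃ a, φ a = x then S hx.choose else S vn with hS''def
    have hSφ : ∀ a, S'' (φ a) = S a := by
      intro a
      have hex : ∃ b, φ b = φ a := ⟨a, rfl⟩
      simp only [hS''def, dif_pos hex]
      exact congrArg S (hφ hex.choose_spec)
    have hSc : ∀ k ∈ Imᶜ, S'' k = S vn := by
      intro k hk
      have : ¬ ∃ a, φ a = k := by
        rw [← hmemIm]; simpa using hk
      simp only [hS''def, dif_neg this]
    funext x
    rw [lap_mulVec cE'' hloop'' S'' x, ← Finset.sum_add_sum_compl Im]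
    by_cases hx : ∃ a, φ a = x
    · obtain ⟨a, rfl⟩ := hx
      have hcompl : ∑ k ∈ Imᶜ, (cE'' s(φ a, k) : ℤ) * (S'' (φ a) - S'' k) = 0 := by
        refine Finset.sum_eq_zero fun k hk => ?_
        by_cases ha : a = vn
        · rw [hSφ, hSc k hk, ha, sub_self, mul_zero]
        · rw [hedge0 k hk a ha, zero_mul]
      rw [hcompl, add_zero, himg S'' a]
      have : ∑ b, (cE s(a, b) : ℤ) * (S'' (φ a) - S'' (φ b))
          = (lap cE).mulVec S a := by
        rw [lap_mulVec cE hloop S a]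
        exact Finset.sum_congr rfl fun b _ => by rw [hSφ, hSφ]
      rw [this, hS, hsingle]
    · have hx' : x ∈ Imᶜ := by rw [Finset.mem_compl, hmemIm]; exact hx
      have hcompl : ∑ k ∈ Imᶜ, (cE'' s(x, k) : ℤ) * (S'' x - S'' k) = 0 := by
        refine Finset.sum_eq_zero fun k hk => ?_
        rw [hSc x hx', hSc k hk, sub_self, mul_zero]
      have himg0 : ∑ k ∈ Im, (cE'' s(x, k) : ℤ) * (S'' x - S'' k) = 0 := by
        rw [hIm, Finset.sum_image hinj2]
        refine Finset.sum_eq_zero fun b _ => ?_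
        by_cases hb : b = vn
        · rw [hb, hSc x hx', hSφ, sub_self, mul_zero]
        · rw [hsep x (fun a hxa => (hnotIm x hx' a) hxa) b hb]
          simp
      rw [hcompl, himg0, add_zero]
      have h1 : x ≠ φ i := hnotIm x hx' i
      have h2 : x ≠ φ j := hnotIm x hx' j
      simp [Pi.single_apply, h1, h2]
  · -- lower bound
    rintro h' ⟨hpos', S'', hS''⟩
    set S : Fin n → ℤ := fun a => S'' (φ a) with hSdef
    refine hord.2 ⟨hpos', S, ?_⟩
    have key : ∀ a : Fin n, a ≠ vn →
        (lap cE).mulVec S a = ((h' : ℤ) • ((Pi.single i 1 - Pi.single j 1 : Fin n → ℤ))) a := by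
      intro a ha
      have := congrFun hS'' (φ a)
      rw [lap_mulVec cE'' hloop'' S'' (φ a), ← Finset.sum_add_sum_compl Im] at this
      have hcompl : ∑ k ∈ Imᶜ, (cE'' s(φ a, k) : ℤ) * (S'' (φ a) - S'' k) = 0 :=
        Finset.sum_eq_zero fun k hk => by rw [hedge0 k hk a ha, zero_mul]
      rw [hcompl, add_zero, himg S'' a, hsingle] at this
      rw [lap_mulVec cE hloop S a]
      exact this
    have hsum1 : ∑ a, (lap cE).mulVec S a = 0 := sum_lap_mulVec cE hloop S
    have hsum2 : ∑ a, ((h' : ℤ) • ((Pi.single i 1 - Pi.single j 1 : Fin n → ℤ))) a = 0 := by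
      simp only [Pi.smul_apply, Pi.sub_apply, Pi.single_apply, smul_eq_mul, mul_sub]
      rw [Finset.sum_sub_distrib]
      simp
    funext a
    by_cases ha : a = vn
    · rw [ha]
      exact eq_at_of_sum_eq _ _ vn key (by rw [hsum1, hsum2])
    · exact key a ha
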